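/- Let κ = 3^{2/3}/2^{1/3}. For every α ∈ ℝ with α ∉ √2/3 + 2πℤ, the Melnikov function M₊ is differentiable at α and M₊'(α) = I₁(α) − I₂(α), where I₁(α) = κ ∫₀^{+∞} [ s^{2/3} cos(α−s) (1+κ²s^{4/3}−2κ s^{2/3}cos(α−s))^{−3/2} − 3κ s^{4/3} sin²(α−s) (1+κ²s^{4/3}−2κ s^{2/3}cos(α−s))^{−5/2} ] ds and I₂(α) = √(2/κ) lim_{T→+∞} ∫₀^{T} sin(α−s) s^{−1/3} ds, both integrals being convergent. -/

import Mathlib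

open Real Filter MeasureTheory intervalIntegral
open scoped Topology

/-- The constant `κ = 3^{2/3}/2^{1/3}`. -/
noncomputable def kap : ℝ := (3 : ℝ) ^ ((2 : ℝ) / 3) / (2 : ℝ) ^ ((1 : ℝ) / 3)

/-- The (absolutely convergent) integrand of the Melnikov function `M₊`. -/
noncomputable def melInt (α s : ℝ) : ℝ :=
  s ^ ((2 : ℝ) / 3) * Real.sin (α - s) *
    (1 + kap ^ 2 * s ^ ((4 : ℝ) / 3)
      - 2 * kap * s ^ ((2 : ℝ) / 3) * Real.cos (α - s)) ^ (-(3 / 2) : ℝ)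

/-- The Melnikov function
`M₊(α) = κ ∫₀^∞ melInt(α,s) ds + √(2/κ) · lim_{T→∞} ∫₀^T cos(α-s) s^{-1/3} ds`. -/
noncomputable def Mplus (α : ℝ) : ℝ :=
  kap * (∫ s in Set.Ioi (0 : ℝ), melInt α s) +
    Real.sqrt (2 / kap) *
      limUnder atTop (fun T => ∫ s in (0 : ℝ)..T, Real.cos (α - s) * s ^ (-(1 / 3) : ℝ))

/-- The integrand `F(θ,s)` of the non-oscillatory part `I₁` of `M₊'`. -/
noncomputable def Fder (θ s : ℝ) : ℝ :=
  s ^ ((2 : ℝ) / 3) * Real.cos (θ - s) *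
    (1 + kap ^ 2 * s ^ ((4 : ℝ) / 3)
      - 2 * kap * s ^ ((2 : ℝ) / 3) * Real.cos (θ - s)) ^ (-(3 / 2) : ℝ)
  - 3 * kap * s ^ ((4 : ℝ) / 3) * Real.sin (θ - s) ^ 2 *
    (1 + kap ^ 2 * s ^ ((4 : ℝ) / 3)
      - 2 * kap * s ^ ((2 : ℝ) / 3) * Real.cos (θ - s)) ^ (-(5 / 2) : ℝ)

/-!
Write `D(θ, s) = (1 - κ s^{2/3})² + 2κ s^{2/3} (1 - cos (θ - s))` for the base of the powers in
`melInt` and `Fder`. It vanishes only at `s = κ^{-3/2} = √2/3` with `θ - s ∈ 2πℤ`, so for `α`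
off the singular set it satisfies `D(θ, s) ≥ c (1 + s^{4/3})` uniformly for `θ` near `α`: by
compactness for bounded `s`, and because `D ~ κ² s^{4/3}` for large `s`. Hence `melInt θ` and
its `θ`-derivative `Fder θ` are both dominated by `C (1 + s^{4/3})⁻¹`, and the first integral
may be differentiated under the integral sign.

The oscillatory integral `∫₀^T cos (θ - s) s^{-1/3} ds` equals `cos θ · A(T) + sin θ · B(T)`
with `A(T), B(T)` the integrals of `cos s · s^{-1/3}` and `sin s · s^{-1/3}`; these converge as
`T → ∞` after one integration by parts, and differentiating the limit in `θ` produces the sine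
integral with a minus sign.
-/

theorem mul_rpow_neg_le {u q c D a b : ℝ} (hc : 0 < c) (hq : 1 ≤ q) (hD : c * q ≤ D)
    (hu : u ≤ q ^ a) (hb : 0 ≤ b) (hab : a + 1 ≤ b) : u * D ^ (-b) ≤ c ^ (-b) * q⁻¹ := by
  have hq0 : 0 < q := by linarith
  calc u * D ^ (-b) ≤ q ^ a * (c * q) ^ (-b) :=
        mul_le_mul hu (rpow_le_rpow_of_nonpos (by positivity) hD (by linarith))
          (rpow_nonneg ((mul_pos hc hq0).le.trans hD) _) (by positivity)
    _ = c ^ (-b) * q ^ (a + -b) := by rw [mul_rpow hc.le hq0.le, rpow_add hq0]; ring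
    _ ≤ c ^ (-b) * q ^ (-1 : ℝ) :=
        mul_le_mul_of_nonneg_left (rpow_le_rpow_of_exponent_le hq (by linarith)) (by positivity)
    _ = c ^ (-b) * q⁻¹ := by rw [rpow_neg_one]

theorem integrableOn_Ioi_inv_one_add_rpow {p : ℝ} (hp : 1 < p) :
    IntegrableOn (fun s : ℝ => (1 + s ^ p)⁻¹) (Set.Ioi 0) := by
  rw [← Set.Ioc_union_Ioi_eq_Ioi zero_le_one]
  refine IntegrableOn.union ?_ ?_
  · refine (ContinuousOn.integrableOn_Icc ?_).mono_set Set.Ioc_subset_Icc_self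
    refine ContinuousOn.inv₀ (by fun_prop (disch := linarith)) fun s hs => ?_
    have := rpow_nonneg hs.1 p
    positivity
  · refine Integrable.mono' (integrableOn_Ioi_rpow_of_lt (by linarith : -p < -1) one_pos)
      (by fun_prop : Measurable fun s : ℝ => (1 + s ^ p)⁻¹).aestronglyMeasurable ?_
    filter_upwards [ae_restrict_mem measurableSet_Ioi] with s hs
    have hs0 : 0 < s := one_pos.trans hs
    rw [rpow_neg hs0.le, norm_inv, Real.norm_eq_abs, abs_of_pos (by positivity)]
    exact inv_anti₀ (rpow_pos_of_pos hs0 p) (by linarith)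

theorem exists_tendsto_integral_mul_rpow {v w : ℝ → ℝ} {r C : ℝ} (hr₀ : -1 < r) (hr : r < 0)
    (hv : ∀ x, HasDerivAt v (w x) x) (hw : Continuous w) (hC : ∀ x, |v x| ≤ C) :
    ∃ L, Tendsto (fun T => ∫ s in (0 : ℝ)..T, w s * s ^ r) atTop (𝓝 L) := by
  set g : ℝ → ℝ := fun s => r * s ^ (r - 1) * v s
  have hpow_deriv : ∀ x ∈ Set.Ici (1 : ℝ), HasDerivAt (fun s : ℝ => s ^ r) (r * x ^ (r - 1)) x :=
    fun x hx => hasDerivAt_rpow_const (Or.inl (by linarith [Set.mem_Ici.1 hx]))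
  have hg : IntegrableOn g (Set.Ioi 1) := by
    have hvc : Continuous v := continuous_iff_continuousAt.2 fun x => (hv x).continuousAt
    refine Integrable.mono'
      ((integrableOn_Ioi_rpow_of_lt (a := r - 1) (by linarith) one_pos).const_mul (-r * C))
      (by fun_prop : Measurable g).aestronglyMeasurable ?_
    filter_upwards [ae_restrict_mem measurableSet_Ioi] with s hs
    have hs0 : 0 ≤ s ^ (r - 1) := rpow_nonneg (by linarith [Set.mem_Ioi.1 hs]) _
    rw [Real.norm_eq_abs, abs_mul, abs_mul, abs_of_neg hr, abs_of_nonneg hs0]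
    nlinarith [hC s, mul_nonneg (neg_nonneg.2 hr.le) hs0]
  have hIBP : ∀ T ≥ (1 : ℝ), ∫ s in (1 : ℝ)..T, w s * s ^ r
      = T ^ r * v T - v 1 - ∫ s in (1 : ℝ)..T, g s := by
    intro T hT
    have hIcc : ∀ x ∈ Set.uIcc 1 T, x ∈ Set.Ici (1 : ℝ) := fun x hx => by
      rw [Set.uIcc_of_le hT] at hx; exact hx.1
    have := intervalIntegral.integral_mul_deriv_eq_deriv_mul
      (fun x hx => hpow_deriv x (hIcc x hx)) (fun x _ => hv x)
      (ContinuousOn.intervalIntegrable fun x hx => ((continuousAt_rpow_const x _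
        (Or.inl (by linarith [Set.mem_Ici.1 (hIcc x hx)]))).const_mul r).continuousWithinAt)
      (hw.intervalIntegrable 1 T)
    simp only [mul_comm (w _)]
    rw [this, one_rpow, one_mul]
  have hboundary : Tendsto (fun T : ℝ => T ^ r * v T) atTop (𝓝 0) := by
    refine squeeze_zero_norm' ?_
      (by simpa using (tendsto_rpow_neg_atTop (y := -r) (by linarith)).mul_const C)
    filter_upwards [eventually_ge_atTop 0] with T hT
    rw [Real.norm_eq_abs, abs_mul, abs_of_nonneg (rpow_nonneg hT _)]
    exact mul_le_mul_of_nonneg_left (hC T) (rpow_nonneg hT _)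
  have hint : ∀ a b : ℝ, IntervalIntegrable (fun s => w s * s ^ r) volume a b := fun a b =>
    (intervalIntegral.intervalIntegrable_rpow' hr₀).continuousOn_mul hw.continuousOn
  refine ⟨(∫ s in (0 : ℝ)..1, w s * s ^ r) + (0 - v 1 - ∫ s in Set.Ioi 1, g s), ?_⟩
  refine Tendsto.congr' ?_ (tendsto_const_nhds.add ((hboundary.sub_const _).sub
    (intervalIntegral_tendsto_integral_Ioi 1 hg tendsto_id)))
  filter_upwards [eventually_ge_atTop 1] with T hT
  rw [id, ← hIBP T hT, integral_add_adjacent_intervals (hint 0 1) (hint 1 T)]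

section Oscillatory

variable {r A B : ℝ}

theorem tendsto_integral_cos_sub_mul_rpow (hr : -1 < r)
    (hA : Tendsto (fun T => ∫ s in (0 : ℝ)..T, cos s * s ^ r) atTop (𝓝 A))
    (hB : Tendsto (fun T => ∫ s in (0 : ℝ)..T, sin s * s ^ r) atTop (𝓝 B)) (θ : ℝ) :
    Tendsto (fun T => ∫ s in (0 : ℝ)..T, cos (θ - s) * s ^ r) atTop
      (𝓝 (cos θ * A + sin θ * B)) := by
  refine ((hA.const_mul _).add (hB.const_mul _)).congr fun T => ?_
  have hpow := intervalIntegral.intervalIntegrable_rpow' (a := 0) (b := T) hr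
  rw [← intervalIntegral.integral_const_mul, ← intervalIntegral.integral_const_mul,
    ← intervalIntegral.integral_add
      (hpow.continuousOn_mul continuous_cos.continuousOn |>.const_mul _)
      (hpow.continuousOn_mul continuous_sin.continuousOn |>.const_mul _)]
  simp only [cos_sub]
  congr 1; ext s; ring

theorem tendsto_integral_sin_sub_mul_rpow (hr : -1 < r)
    (hA : Tendsto (fun T => ∫ s in (0 : ℝ)..T, cos s * s ^ r) atTop (𝓝 A))
    (hB : Tendsto (fun T => ∫ s in (0 : ℝ)..T, sin s * s ^ r) atTop (𝓝 B)) (θ : ℝ) :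
    Tendsto (fun T => ∫ s in (0 : ℝ)..T, sin (θ - s) * s ^ r) atTop
      (𝓝 (sin θ * A - cos θ * B)) := by
  refine ((hA.const_mul _).sub (hB.const_mul _)).congr fun T => ?_
  have hpow := intervalIntegral.intervalIntegrable_rpow' (a := 0) (b := T) hr
  rw [← intervalIntegral.integral_const_mul, ← intervalIntegral.integral_const_mul,
    ← intervalIntegral.integral_sub
      (hpow.continuousOn_mul continuous_cos.continuousOn |>.const_mul _)
      (hpow.continuousOn_mul continuous_sin.continuousOn |>.const_mul _)]
  simp only [sin_sub]
  congr 1; ext s; ring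

end Oscillatory

noncomputable def melDen (θ s : ℝ) : ℝ :=
  1 + kap ^ 2 * s ^ ((4 : ℝ) / 3) - 2 * kap * s ^ ((2 : ℝ) / 3) * cos (θ - s)

theorem melInt_eq (θ s : ℝ) :
    melInt θ s = s ^ ((2 : ℝ) / 3) * sin (θ - s) * melDen θ s ^ (-(3 / 2) : ℝ) := rfl

theorem Fder_eq (θ s : ℝ) :
    Fder θ s = s ^ ((2 : ℝ) / 3) * cos (θ - s) * melDen θ s ^ (-(3 / 2) : ℝ)
      - 3 * kap * s ^ ((4 : ℝ) / 3) * sin (θ - s) ^ 2 * melDen θ s ^ (-(5 / 2) : ℝ) := rfl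

theorem kap_pos : 0 < kap := by unfold kap; positivity

theorem rpow_four_thirds {s : ℝ} (hs : 0 ≤ s) : s ^ ((4 : ℝ) / 3) = (s ^ ((2 : ℝ) / 3)) ^ 2 := by
  rw [← rpow_natCast, ← rpow_mul hs]; norm_num

theorem one_div_kap_rpow : (1 / kap) ^ ((3 : ℝ) / 2) = √2 / 3 := by
  rw [kap, one_div_div, div_rpow (by positivity) (by positivity), ← rpow_mul (by norm_num),
    ← rpow_mul (by norm_num), sqrt_eq_rpow]
  norm_num

theorem melDen_eq_sq_add (θ : ℝ) {s : ℝ} (hs : 0 ≤ s) :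
    melDen θ s = (1 - kap * s ^ ((2 : ℝ) / 3)) ^ 2
      + 2 * kap * s ^ ((2 : ℝ) / 3) * (1 - cos (θ - s)) := by
  rw [melDen, rpow_four_thirds hs]; ring

theorem melDen_pos {θ s : ℝ} (hθ : cos (θ - √2 / 3) ≠ 1) (hs : 0 ≤ s) : 0 < melDen θ s := by
  rw [melDen_eq_sq_add θ hs]
  set t := s ^ ((2 : ℝ) / 3) with ht_def
  have hb : 0 ≤ 2 * kap * t * (1 - cos (θ - s)) :=
    mul_nonneg (by have := kap_pos; positivity) (by linarith [cos_le_one (θ - s)])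
  by_contra! hle
  have hkt : kap * t = 1 := by
    have : (1 - kap * t) ^ 2 = 0 := le_antisymm (by linarith) (sq_nonneg _)
    linarith [pow_eq_zero_iff two_ne_zero |>.1 this]
  have hcos : cos (θ - s) = 1 := by nlinarith
  have hs_eq : s = √2 / 3 := by
    rw [← one_div_kap_rpow, ← eq_one_div_of_mul_eq_one_right hkt, ht_def, ← rpow_mul hs]
    norm_num
  exact hθ (hs_eq ▸ hcos)

theorem melDen_ge_of_two_le {θ s : ℝ} (hs : 0 ≤ s) (h : 2 ≤ kap * s ^ ((2 : ℝ) / 3)) :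
    (1 + kap ^ 2 * s ^ ((4 : ℝ) / 3)) / 8 ≤ melDen θ s := by
  rw [melDen_eq_sq_add θ hs, rpow_four_thirds hs]
  have hb : 0 ≤ 2 * kap * s ^ ((2 : ℝ) / 3) * (1 - cos (θ - s)) :=
    mul_nonneg (by linarith) (by linarith [cos_le_one (θ - s)])
  nlinarith [sq_nonneg (kap * s ^ ((2 : ℝ) / 3) - 2)]

theorem continuous_melDen : Continuous fun p : ℝ × ℝ => melDen p.1 p.2 := by
  unfold melDen; fun_prop (disch := norm_num)

theorem exists_pos_mul_le_melDen {K : Set ℝ} (hK : IsCompact K)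
    (hKθ : ∀ θ ∈ K, cos (θ - √2 / 3) ≠ 1) :
    ∃ c > 0, ∀ θ ∈ K, ∀ s, 0 ≤ s → c * (1 + s ^ ((4 : ℝ) / 3)) ≤ melDen θ s := by
  obtain ⟨S, hS⟩ : ∃ S, ∀ s ≥ S, 2 ≤ kap * s ^ ((2 : ℝ) / 3) := eventually_atTop.1 <|
    ((tendsto_rpow_atTop (by norm_num)).const_mul_atTop kap_pos).eventually_ge_atTop 2
  have hq : ∀ s : ℝ, 0 ≤ s → 0 < 1 + s ^ ((4 : ℝ) / 3) := fun s hs => by positivity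
  obtain ⟨c₀, hc₀, hc₀K⟩ := (hK.prod (isCompact_Icc (a := 0) (b := S))).exists_forall_le'
    (f := fun p : ℝ × ℝ => melDen p.1 p.2 / (1 + p.2 ^ ((4 : ℝ) / 3)))
    (continuous_melDen.continuousOn.div (by fun_prop (disch := norm_num))
      fun p hp => (hq p.2 hp.2.1).ne')
    fun p hp => div_pos (melDen_pos (hKθ p.1 hp.1) hp.2.1) (hq p.2 hp.2.1)
  refine ⟨min c₀ (min 1 (kap ^ 2) / 8), by have := kap_pos; positivity, fun θ hθ s hs => ?_⟩
  rcases le_or_gt s S with hsS | hsS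
  · have := hc₀K (θ, s) ⟨hθ, hs, hsS⟩
    rw [le_div_iff₀ (hq s hs)] at this
    exact le_trans (mul_le_mul_of_nonneg_right (min_le_left _ _) (hq s hs).le) this
  · refine le_trans ?_ (melDen_ge_of_two_le hs (hS s hsS.le))
    have h1 : min c₀ (min 1 (kap ^ 2) / 8) ≤ 1 / 8 :=
      (min_le_right _ _).trans (by linarith [min_le_left 1 (kap ^ 2)])
    have h2 : min c₀ (min 1 (kap ^ 2) / 8) ≤ kap ^ 2 / 8 :=
      (min_le_right _ _).trans (by linarith [min_le_right 1 (kap ^ 2)])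
    nlinarith [rpow_nonneg hs ((4 : ℝ) / 3)]

theorem rpow_two_thirds_le {s : ℝ} (hs : 0 ≤ s) :
    s ^ ((2 : ℝ) / 3) ≤ (1 + s ^ ((4 : ℝ) / 3)) ^ (1 / 2 : ℝ) := by
  rw [← sqrt_eq_rpow, rpow_four_thirds hs]
  exact le_sqrt_of_sq_le (by linarith)

section Bounds

variable {θ s c : ℝ}

theorem abs_melInt_le (hc : 0 < c) (hs : 0 ≤ s)
    (hD : c * (1 + s ^ ((4 : ℝ) / 3)) ≤ melDen θ s) :
    |melInt θ s| ≤ c ^ (-(3 / 2) : ℝ) * (1 + s ^ ((4 : ℝ) / 3))⁻¹ := by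
  have hD0 : 0 ≤ melDen θ s := le_trans (by positivity) hD
  rw [melInt_eq, abs_mul, abs_mul, abs_of_nonneg (rpow_nonneg hs _),
    abs_of_nonneg (rpow_nonneg hD0 _)]
  refine mul_rpow_neg_le (a := 1 / 2) hc (by linarith [rpow_nonneg hs ((4 : ℝ) / 3)]) hD ?_
    (by norm_num) (by norm_num)
  exact (mul_le_of_le_one_right (rpow_nonneg hs _) (abs_sin_le_one _)).trans
    (rpow_two_thirds_le hs)

theorem abs_Fder_le (hc : 0 < c) (hs : 0 ≤ s)
    (hD : c * (1 + s ^ ((4 : ℝ) / 3)) ≤ melDen θ s) :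
    |Fder θ s| ≤ (c ^ (-(3 / 2) : ℝ) + 3 * kap * c ^ (-(5 / 2) : ℝ))
      * (1 + s ^ ((4 : ℝ) / 3))⁻¹ := by
  have hD0 : 0 ≤ melDen θ s := le_trans (by positivity) hD
  have hq : 1 ≤ 1 + s ^ ((4 : ℝ) / 3) := by linarith [rpow_nonneg hs ((4 : ℝ) / 3)]
  have h₁ : |s ^ ((2 : ℝ) / 3) * cos (θ - s) * melDen θ s ^ (-(3 / 2) : ℝ)|
      ≤ c ^ (-(3 / 2) : ℝ) * (1 + s ^ ((4 : ℝ) / 3))⁻¹ := by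
    rw [abs_mul, abs_mul, abs_of_nonneg (rpow_nonneg hs _), abs_of_nonneg (rpow_nonneg hD0 _)]
    refine mul_rpow_neg_le (a := 1 / 2) hc hq hD ?_ (by norm_num) (by norm_num)
    exact (mul_le_of_le_one_right (rpow_nonneg hs _) (abs_cos_le_one _)).trans
      (rpow_two_thirds_le hs)
  have h₂ : |3 * kap * s ^ ((4 : ℝ) / 3) * sin (θ - s) ^ 2 * melDen θ s ^ (-(5 / 2) : ℝ)|
      ≤ 3 * kap * (c ^ (-(5 / 2) : ℝ) * (1 + s ^ ((4 : ℝ) / 3))⁻¹) := by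
    have hk := kap_pos
    have hu := mul_rpow_neg_le (u := s ^ ((4 : ℝ) / 3) * sin (θ - s) ^ 2) (a := 1) (b := 5 / 2)
      hc hq hD ?_ (by norm_num) (by norm_num)
    · rw [abs_of_nonneg (by positivity)]
      calc _ = 3 * kap * (s ^ ((4 : ℝ) / 3) * sin (θ - s) ^ 2 * melDen θ s ^ (-(5 / 2) : ℝ)) := by
            ring
        _ ≤ _ := mul_le_mul_of_nonneg_left hu (by positivity)
    rw [rpow_one]
    nlinarith [rpow_nonneg hs ((4 : ℝ) / 3), sin_sq_le_one (θ - s)]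
  rw [Fder_eq]
  linarith [abs_sub (s ^ ((2 : ℝ) / 3) * cos (θ - s) * melDen θ s ^ (-(3 / 2) : ℝ))
    (3 * kap * s ^ ((4 : ℝ) / 3) * sin (θ - s) ^ 2 * melDen θ s ^ (-(5 / 2) : ℝ))]

end Bounds

theorem hasDerivAt_melInt {θ s : ℝ} (hs : 0 ≤ s) (hD : melDen θ s ≠ 0) :
    HasDerivAt (fun θ => melInt θ s) (Fder θ s) θ := by
  have hsub : HasDerivAt (fun θ : ℝ => θ - s) 1 θ := (hasDerivAt_id θ).sub_const s
  have hden : HasDerivAt (fun θ => melDen θ s) (2 * kap * s ^ ((2 : ℝ) / 3) * sin (θ - s)) θ := by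
    refine ((hsub.cos.const_mul (2 * kap * s ^ ((2 : ℝ) / 3))).const_sub
      (1 + kap ^ 2 * s ^ ((4 : ℝ) / 3))).congr_deriv ?_
    ring
  refine ((hsub.sin.const_mul (s ^ ((2 : ℝ) / 3))).mul
    (hden.rpow_const (p := -(3 / 2)) (.inl hD))).congr_deriv ?_
  rw [Fder_eq, rpow_four_thirds hs, show (-(3 / 2) : ℝ) - 1 = -(5 / 2) by norm_num]
  ring

theorem hasDerivAt_integral_melInt {α : ℝ} (hα : cos (α - √2 / 3) ≠ 1) :
    IntegrableOn (melInt α) (Set.Ioi 0) ∧ IntegrableOn (Fder α) (Set.Ioi 0) ∧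
      HasDerivAt (fun θ => ∫ s in Set.Ioi 0, melInt θ s) (∫ s in Set.Ioi 0, Fder α s) α := by
  obtain ⟨ε, hε, hball⟩ := Metric.nhds_basis_closedBall.mem_iff.1 <|
    (isOpen_ne_fun (by fun_prop) continuous_const).mem_nhds
      (show α ∈ {θ | cos (θ - √2 / 3) ≠ 1} from hα)
  obtain ⟨c, hc, hcD⟩ := exists_pos_mul_le_melDen (isCompact_closedBall α ε) fun θ hθ => hball hθ
  set bound : ℝ → ℝ := fun s =>
    (c ^ (-(3 / 2) : ℝ) + 3 * kap * c ^ (-(5 / 2) : ℝ)) * (1 + s ^ ((4 : ℝ) / 3))⁻¹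
  have hbound : IntegrableOn bound (Set.Ioi 0) :=
    (integrableOn_Ioi_inv_one_add_rpow (by norm_num)).const_mul _
  have hmelInt : ∀ s ∈ Set.Ioi (0 : ℝ), ‖melInt α s‖ ≤ bound s := fun s hs => by
    have hs0 : 0 ≤ s := le_of_lt hs
    refine (abs_melInt_le hc hs0 (hcD α (Metric.mem_closedBall_self hε.le) s hs0)).trans ?_
    have := kap_pos
    exact mul_le_mul_of_nonneg_right (le_add_of_nonneg_right (by positivity)) (by positivity)
  have hmelInt_int : IntegrableOn (melInt α) (Set.Ioi 0) :=
    hbound.mono' (by unfold melInt; fun_prop : Measurable (melInt α)).aestronglyMeasurable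
      ((ae_restrict_mem measurableSet_Ioi).mono hmelInt)
  obtain ⟨hFder_int, hderiv⟩ := hasDerivAt_integral_of_dominated_loc_of_deriv_le
    (bound := bound) (F' := Fder) (Metric.ball_mem_nhds α hε)
    (.of_forall fun θ => (by unfold melInt; fun_prop : Measurable (melInt θ)).aestronglyMeasurable)
    hmelInt_int (by unfold Fder; fun_prop : Measurable (Fder α)).aestronglyMeasurable
    ((ae_restrict_mem measurableSet_Ioi).mono fun s (hs : 0 < s) θ hθ =>
      abs_Fder_le hc hs.le (hcD θ (Metric.ball_subset_closedBall hθ) s hs.le))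
    hbound
    ((ae_restrict_mem measurableSet_Ioi).mono fun s (hs : 0 < s) θ hθ =>
      hasDerivAt_melInt hs.le (melDen_pos (hball (Metric.ball_subset_closedBall hθ)) hs.le).ne')
  exact ⟨hmelInt_int, hFder_int, hderiv⟩

/-- For `α` outside `√2/3 + 2πℤ`, the integrals defining `M₊` converge, `M₊` is
differentiable at `α`, and `M₊'(α) = I₁(α) - I₂(α)` with
`I₁(α) = κ ∫₀^∞ F(α,s) ds` and `I₂(α) = √(2/κ) · lim_{T→∞} ∫₀^T sin(α-s) s^{-1/3} ds`. -/
theorem Mplus_hasDerivAt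
    (α : ℝ) (hα : ∀ k : ℤ, α ≠ Real.sqrt 2 / 3 + 2 * π * k) :
    MeasureTheory.IntegrableOn (fun s => melInt α s) (Set.Ioi 0) ∧
    (∃ Lc : ℝ, Tendsto
      (fun T => ∫ s in (0 : ℝ)..T, Real.cos (α - s) * s ^ (-(1 / 3) : ℝ))
      atTop (𝓝 Lc)) ∧
    MeasureTheory.IntegrableOn (fun s => Fder α s) (Set.Ioi 0) ∧
    ∃ Ls : ℝ,
      Tendsto (fun T => ∫ s in (0 : ℝ)..T, Real.sin (α - s) * s ^ (-(1 / 3) : ℝ))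
        atTop (𝓝 Ls) ∧
      HasDerivAt Mplus
        (kap * (∫ s in Set.Ioi (0 : ℝ), Fder α s) - Real.sqrt (2 / kap) * Ls) α := by
  have hcos : cos (α - √2 / 3) ≠ 1 := fun h => by
    obtain ⟨n, hn⟩ := (cos_eq_one_iff _).1 h
    exact hα n (by linear_combination -hn)
  obtain ⟨hmelInt, hFder, hderiv⟩ := hasDerivAt_integral_melInt hcos
  have hr : (-1 : ℝ) < -(1 / 3) := by norm_num
  obtain ⟨A, hA⟩ := exists_tendsto_integral_mul_rpow hr (by norm_num) hasDerivAt_sin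
    continuous_cos abs_sin_le_one
  obtain ⟨B, hB⟩ := exists_tendsto_integral_mul_rpow hr (by norm_num)
    (fun x => (hasDerivAt_cos x).neg.congr_deriv (neg_neg _)) continuous_sin
    (fun x => (abs_neg (cos x)).trans_le (abs_cos_le_one x))
  have hLc := tendsto_integral_cos_sub_mul_rpow hr hA hB
  refine ⟨hmelInt, ⟨_, hLc α⟩, hFder, _, tendsto_integral_sin_sub_mul_rpow hr hA hB α, ?_⟩
  have hMplus : Mplus = fun θ => kap * (∫ s in Set.Ioi 0, melInt θ s)
      + √(2 / kap) * (cos θ * A + sin θ * B) :=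
    funext fun θ => by rw [Mplus, (hLc θ).limUnder_eq]
  rw [hMplus]
  refine ((hderiv.const_mul kap).add ((((hasDerivAt_cos α).mul_const A).add
    ((hasDerivAt_sin α).mul_const B)).const_mul (√(2 / kap)))).congr_deriv ?_
  ring
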